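/- Information Flow Soundness: suppose Γ, ϱ, ⤳ ⊨_IF t^ℓ and t^ℓ →*_⋄ v^{ℓ'}, where v is a stage-0 value built only from markers and constants. Let M = { m ∈ Marker | m ⤳* ℓ }. Then ⌊v⌋_M = v; i.e., every marker occurring in the result v flows (under ⤳*) to the label ℓ of the original expression. -/
import Mathlib


/-- Markers for the augmented semantics. -/
abbrev Marker := String
/-- Program-point labels. -/
abbrev Label := Nat

/-- Atomic constants of SLamJS. -/
inductive Const where
  | undef | null
  | bool (b : Bool)
  | str (s : String)
  | num (n : Int)

/-- Labelled SLamJS expressions: every node carries a label.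
Environments are total functions `String → LExp`, with `hole` as "unbound". -/
inductive LExp where
  | const : Label → Const → LExp
  | var : Label → String → LExp
  | fn : Label → String → LExp → LExp
  | app : Label → LExp → LExp → LExp
  | box : Label → LExp → LExp
  | unbox : Label → LExp → LExp
  | run : Label → LExp → LExp
  | ite : Label → LExp → LExp → LExp → LExp
  | clos : Label → LExp → (String → LExp) → LExp
  | runIn : Label → LExp → (String → LExp) → LExp
  | mark : Label → Marker → LExp → LExp
  | hole : Label → LExp

namespace LExp

/-- The (outer) label of an expression. -/
def lbl : LExp → Label
  | const ℓ _ => ℓ | var ℓ _ => ℓ | fn ℓ _ _ => ℓ | app ℓ _ _ => ℓ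
  | box ℓ _ => ℓ | unbox ℓ _ => ℓ | run ℓ _ => ℓ | ite ℓ _ _ _ => ℓ
  | clos ℓ _ _ => ℓ | runIn ℓ _ _ => ℓ | mark ℓ _ _ => ℓ | hole ℓ => ℓ

/-- Replace the outer label of an expression. -/
def setLbl : LExp → Label → LExp
  | const _ k, ℓ => const ℓ k
  | var _ x, ℓ => var ℓ x
  | fn _ x e, ℓ => fn ℓ x e
  | app _ e1 e2, ℓ => app ℓ e1 e2
  | box _ e, ℓ => box ℓ e
  | unbox _ e, ℓ => unbox ℓ e
  | run _ e, ℓ => run ℓ e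
  | ite _ e1 e2 e3, ℓ => ite ℓ e1 e2 e3
  | clos _ e ρ, ℓ => clos ℓ e ρ
  | runIn _ e ρ, ℓ => runIn ℓ e ρ
  | mark _ m e, ℓ => mark ℓ m e
  | hole _, ℓ => hole ℓ

/-- `(t, ρ)` with the label of `t` on the closure node. -/
def cl (e : LExp) (ρ : String → LExp) : LExp := clos (lbl e) e ρ

/-- Stage-`n` values. -/
inductive IsVal : Nat → LExp → Prop where
  | closV : ∀ ℓ ℓ' x e ρ, IsVal 0 (clos ℓ (fn ℓ' x e) ρ)
  | constV : ∀ n ℓ k, IsVal n (const ℓ k)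
  | boxV : ∀ n ℓ v, IsVal (n+1) v → IsVal n (box ℓ v)
  | varV : ∀ n ℓ x, IsVal (n+1) (var ℓ x)
  | fnV : ∀ n ℓ x e, IsVal (n+1) e → IsVal (n+1) (fn ℓ x e)
  | appV : ∀ n ℓ e1 e2, IsVal (n+1) e1 → IsVal (n+1) e2 → IsVal (n+1) (app ℓ e1 e2)
  | runV : ∀ n ℓ e, IsVal (n+1) e → IsVal (n+1) (run ℓ e)
  | iteV : ∀ n ℓ e1 e2 e3, IsVal (n+1) e1 → IsVal (n+1) e2 → IsVal (n+1) e3 →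
      IsVal (n+1) (ite ℓ e1 e2 e3)
  | unboxV : ∀ n ℓ e, IsVal (n+1) e → IsVal (n+2) (unbox ℓ e)
  | markV : ∀ n ℓ m v, IsVal n v → IsVal n (mark ℓ m v)
  | holeV : ∀ n ℓ, IsVal n (hole ℓ)

/-- Labelled top-level reduction `e ⇢ₙ e'` of the augmented semantics. -/
inductive Red : Nat → LExp → LExp → Prop where
  -- environment propagation
  | constE : ∀ n ℓ ℓ1 k ρ, Red n (clos ℓ (const ℓ1 k) ρ) (const ℓ k)
  | varE : ∀ n ℓ ℓ1 x ρ, Red (n+1) (clos ℓ (var ℓ1 x) ρ) (var ℓ x)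
  | fnE : ∀ n ℓ ℓ1 x e ρ, Red (n+1) (clos ℓ (fn ℓ1 x e) ρ) (fn ℓ x (cl e ρ))
  | appE : ∀ n ℓ ℓ1 e1 e2 ρ,
      Red n (clos ℓ (app ℓ1 e1 e2) ρ) (app ℓ (cl e1 ρ) (cl e2 ρ))
  | boxE : ∀ n ℓ ℓ1 e ρ, Red n (clos ℓ (box ℓ1 e) ρ) (box ℓ (cl e ρ))
  | unboxE : ∀ n ℓ ℓ1 e ρ, Red n (clos ℓ (unbox ℓ1 e) ρ) (unbox ℓ (cl e ρ))
  | runE0 : ∀ ℓ ℓ1 e ρ, Red 0 (clos ℓ (run ℓ1 e) ρ) (runIn ℓ (cl e ρ) ρ)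
  | runES : ∀ n ℓ ℓ1 e ρ, Red (n+1) (clos ℓ (run ℓ1 e) ρ) (run ℓ (cl e ρ))
  | iteE : ∀ n ℓ ℓ1 e1 e2 e3 ρ,
      Red n (clos ℓ (ite ℓ1 e1 e2 e3) ρ) (ite ℓ (cl e1 ρ) (cl e2 ρ) (cl e3 ρ))
  | markE : ∀ n ℓ ℓ1 m e ρ, Red n (clos ℓ (mark ℓ1 m e) ρ) (mark ℓ m (cl e ρ))
  | holeE : ∀ n ℓ ℓ1 ρ, Red n (clos ℓ (hole ℓ1) ρ) (hole ℓ)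
  -- proper reduction
  | lookup : ∀ ℓ ℓ1 x ρ, Red 0 (clos ℓ (var ℓ1 x) ρ) (setLbl (ρ x) ℓ)
  | apply : ∀ ℓ2 ℓ3 ℓf x b ρ v, IsVal 0 v →
      Red 0 (app ℓ3 (clos ℓ2 (fn ℓf x b) ρ) v) (cl b (Function.update ρ x v))
  | unboxR : ∀ ℓ1 ℓ2 v, IsVal 1 v → Red 1 (unbox ℓ2 (box ℓ1 v)) (setLbl v ℓ2)
  | runR : ∀ ℓ1 ℓ2 v ρ, IsVal 1 v → Red 0 (runIn ℓ2 (box ℓ1 v) ρ) (clos ℓ2 v ρ)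
  | ifTrue : ∀ ℓ ℓg e1 e2, Red 0 (ite ℓ (const ℓg (.bool true)) e1 e2) e1
  | ifFalse : ∀ ℓ ℓg e1 e2, Red 0 (ite ℓ (const ℓg (.bool false)) e1 e2) e2
  -- lifts
  | liftApp : ∀ ℓ2 ℓ3 ℓm m t ρ v, IsVal 0 v →
      Red 0 (app ℓ3 (clos ℓ2 (mark ℓm m t) ρ) v) (mark ℓ3 m (app ℓ3 (cl t ρ) v))
  | liftIf : ∀ ℓ ℓ0 m v e1 e2, IsVal 0 v →
      Red 0 (ite ℓ (mark ℓ0 m v) e1 e2) (mark ℓ m (ite ℓ v e1 e2))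
  | liftUnbox : ∀ ℓ1 ℓ2 m v, IsVal 1 v →
      Red 1 (unbox ℓ2 (mark ℓ1 m v)) (mark ℓ2 m (unbox ℓ2 v))
  | liftRunIn : ∀ ℓ1 ℓ2 m v ρ, IsVal 0 v →
      Red 0 (runIn ℓ2 (mark ℓ1 m v) ρ) (mark ℓ2 m (runIn ℓ2 v ρ))

/-- Labelled contextual evaluation `e →ₘ e'`. -/
inductive Ev : Nat → LExp → LExp → Prop where
  | red : ∀ n e e', Red n e e' → Ev n e e'
  | appL : ∀ m ℓ e1 e1' e2, Ev m e1 e1' → Ev m (app ℓ e1 e2) (app ℓ e1' e2)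
  | appR : ∀ m ℓ v e e', IsVal m v → Ev m e e' → Ev m (app ℓ v e) (app ℓ v e')
  | fnB : ∀ m ℓ x e e', Ev (m+1) e e' → Ev (m+1) (fn ℓ x e) (fn ℓ x e')
  | boxC : ∀ m ℓ e e', Ev (m+1) e e' → Ev m (box ℓ e) (box ℓ e')
  | unboxC : ∀ m ℓ e e', Ev m e e' → Ev (m+1) (unbox ℓ e) (unbox ℓ e')
  | runC : ∀ m ℓ e e', Ev m e e' → Ev m (run ℓ e) (run ℓ e')
  | runInC : ∀ m ℓ e e' ρ, Ev m e e' → Ev m (runIn ℓ e ρ) (runIn ℓ e' ρ)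
  | closC : ∀ m ℓ e e' ρ, Ev m e e' → Ev m (clos ℓ e ρ) (clos ℓ e' ρ)
  | iteG : ∀ m ℓ e1 e1' e2 e3, Ev m e1 e1' → Ev m (ite ℓ e1 e2 e3) (ite ℓ e1' e2 e3)
  | iteT : ∀ m ℓ v e2 e2' e3, IsVal (m+1) v → Ev (m+1) e2 e2' →
      Ev (m+1) (ite ℓ v e2 e3) (ite ℓ v e2' e3)
  | iteF : ∀ m ℓ v1 v2 e3 e3', IsVal (m+1) v1 → IsVal (m+1) v2 → Ev (m+1) e3 e3' →
      Ev (m+1) (ite ℓ v1 v2 e3) (ite ℓ v1 v2 e3')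
  | markC : ∀ m ℓ mk e e', Ev m e e' → Ev m (mark ℓ mk e) (mark ℓ mk e')

/-- One evaluation step at some level. -/
def StepAny (e e' : LExp) : Prop := ∃ m, Ev m e e'

/-- `→*_⋄`: zero or more evaluation steps at arbitrary levels. -/
def EvStar : LExp → LExp → Prop := Relation.ReflTransGen StepAny

end LExp

/-- Abstract values of the 0CFA. -/
inductive AbsVal where
  | NULL | UNDEF | BOOL | NUM | STR
  | FUN (x : String) (e : LExp)
  | BOX (e : LExp)

/-- Abstraction `⌈k⌉` of a literal. -/
def absConst : Const → AbsVal
  | .null => .NULL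
  | .undef => .UNDEF
  | .bool _ => .BOOL
  | .num _ => .NUM
  | .str _ => .STR

/-- Abstract cache. -/
abbrev AbsCache := Label → Set AbsVal
/-- Abstract environment (over parameter names). -/
abbrev AbsEnvMap := String → Set AbsVal

open LExp in
mutual
/-- The 0CFA acceptability judgement `Γ, ϱ ⊨ e`. -/
inductive CfaAcc (Γ : AbsCache) (ϱ : AbsEnvMap) : LExp → Prop where
  | const : ∀ ℓ k, absConst k ∈ Γ ℓ → CfaAcc Γ ϱ (const ℓ k)
  | var : ∀ ℓ x, ϱ x ⊆ Γ ℓ → CfaAcc Γ ϱ (var ℓ x)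
  | fn : ∀ ℓ x e ν, CfaAcc Γ ϱ e →
      ν ∈ Γ ℓ → Approx Γ ϱ ν (fn ℓ x e) → CfaAcc Γ ϱ (fn ℓ x e)
  | app : ∀ ℓ e1 e2, CfaAcc Γ ϱ e1 → CfaAcc Γ ϱ e2 →
      (∀ x b, AbsVal.FUN x b ∈ Γ (lbl e1) → Γ (lbl e2) ⊆ ϱ x ∧ Γ (lbl b) ⊆ Γ ℓ) →
      CfaAcc Γ ϱ (app ℓ e1 e2)
  | box : ∀ ℓ e ν, CfaAcc Γ ϱ e →
      ν ∈ Γ ℓ → Approx Γ ϱ ν (box ℓ e) → CfaAcc Γ ϱ (box ℓ e)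
  | unbox : ∀ ℓ e, CfaAcc Γ ϱ e →
      (∀ e', AbsVal.BOX e' ∈ Γ (lbl e) → Γ (lbl e') ⊆ Γ ℓ) → CfaAcc Γ ϱ (unbox ℓ e)
  | run : ∀ ℓ e, CfaAcc Γ ϱ e →
      (∀ e', AbsVal.BOX e' ∈ Γ (lbl e) → Γ (lbl e') ⊆ Γ ℓ) → CfaAcc Γ ϱ (run ℓ e)
  | runIn : ∀ ℓ e ρ, CfaAcc Γ ϱ e → AccEnv Γ ϱ ρ →
      (∀ e', AbsVal.BOX e' ∈ Γ (lbl e) → Γ (lbl e') ⊆ Γ ℓ) → CfaAcc Γ ϱ (runIn ℓ e ρ)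
  | ite : ∀ ℓ e1 e2 e3, CfaAcc Γ ϱ e1 → CfaAcc Γ ϱ e2 → CfaAcc Γ ϱ e3 →
      Γ (lbl e2) ⊆ Γ ℓ → Γ (lbl e3) ⊆ Γ ℓ → CfaAcc Γ ϱ (ite ℓ e1 e2 e3)
  | clos : ∀ ℓ e ρ, CfaAcc Γ ϱ e → AccEnv Γ ϱ ρ → Γ (lbl e) ⊆ Γ ℓ →
      CfaAcc Γ ϱ (clos ℓ e ρ)
  | mark : ∀ ℓ m e, CfaAcc Γ ϱ e → Γ (lbl e) ⊆ Γ ℓ → CfaAcc Γ ϱ (mark ℓ m e)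
  | hole : ∀ ℓ, CfaAcc Γ ϱ (hole ℓ)

/-- Acceptability of an explicit environment `Γ, ϱ ⊨ ρ`. -/
inductive AccEnv (Γ : AbsCache) (ϱ : AbsEnvMap) : (String → LExp) → Prop where
  | intro : ∀ ρ, (∀ x, CfaAcc Γ ϱ (ρ x)) → (∀ x, Γ (lbl (ρ x)) ⊆ ϱ x) → AccEnv Γ ϱ ρ

/-- The approximation judgement `Γ, ϱ ⊨ ν ≈ t`, closed under reduction. -/
inductive Approx (Γ : AbsCache) (ϱ : AbsEnvMap) : AbsVal → LExp → Prop where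
  | constA : ∀ ℓ k, Approx Γ ϱ (absConst k) (const ℓ k)
  | funA : ∀ ℓ x e, Approx Γ ϱ (.FUN x e) (fn ℓ x e)
  | boxA : ∀ ℓ e, Approx Γ ϱ (.BOX e) (box ℓ e)
  | redA : ∀ n ν t t', Approx Γ ϱ ν t → Ev n t t' → Approx Γ ϱ ν t'
  | closA : ∀ ℓ ν t ρ, Approx Γ ϱ ν t → AccEnv Γ ϱ ρ → Approx Γ ϱ ν (clos ℓ t ρ)
end

/-- Nodes of the information-flow graph: `Label ⊎ Name ⊎ Marker`. -/
inductive Node where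
  | lab : Label → Node
  | nm : String → Node
  | mk : Marker → Node

open LExp Node in
mutual
/-- The information-flow constraints on the relation `F` (`⤳`), per the
constraint table: `FlowOk Γ ϱ F e` holds when all (direct and indirect)
flow constraints generated by `e` are satisfied by `F`. -/
inductive FlowOk (Γ : AbsCache) (ϱ : AbsEnvMap) (F : Node → Node → Prop) : LExp → Prop where
  | const : ∀ ℓ k, FlowOk Γ ϱ F (const ℓ k)
  | var : ∀ ℓ x, F (nm x) (lab ℓ) → FlowOk Γ ϱ F (var ℓ x)
  | fn : ∀ ℓ x e, FlowOk Γ ϱ F e → FlowOk Γ ϱ F (fn ℓ x e)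
  | app : ∀ ℓ e1 e2, FlowOk Γ ϱ F e1 → FlowOk Γ ϱ F e2 →
      (∀ x b, AbsVal.FUN x b ∈ Γ (lbl e1) →
        F (lab (lbl e2)) (nm x) ∧ F (lab (lbl b)) (lab ℓ)) →
      F (lab (lbl e1)) (lab ℓ) → FlowOk Γ ϱ F (app ℓ e1 e2)
  | ite : ∀ ℓ e1 e2 e3, FlowOk Γ ϱ F e1 → FlowOk Γ ϱ F e2 → FlowOk Γ ϱ F e3 →
      F (lab (lbl e2)) (lab ℓ) → F (lab (lbl e3)) (lab ℓ) →
      F (lab (lbl e1)) (lab ℓ) → FlowOk Γ ϱ F (ite ℓ e1 e2 e3)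
  | clos : ∀ ℓ e ρ, FlowOk Γ ϱ F e → FlowOkEnv Γ ϱ F ρ →
      F (lab (lbl e)) (lab ℓ) → FlowOk Γ ϱ F (clos ℓ e ρ)
  | mark : ∀ ℓ m e, FlowOk Γ ϱ F e →
      F (lab (lbl e)) (lab ℓ) → F (mk m) (lab ℓ) → FlowOk Γ ϱ F (mark ℓ m e)
  | box : ∀ ℓ e, FlowOk Γ ϱ F e → FlowOk Γ ϱ F (box ℓ e)
  | unbox : ∀ ℓ e, FlowOk Γ ϱ F e →
      (∀ e', AbsVal.BOX e' ∈ Γ (lbl e) → F (lab (lbl e')) (lab ℓ)) →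
      F (lab (lbl e)) (lab ℓ) → FlowOk Γ ϱ F (unbox ℓ e)
  | run : ∀ ℓ e, FlowOk Γ ϱ F e →
      (∀ e', AbsVal.BOX e' ∈ Γ (lbl e) → F (lab (lbl e')) (lab ℓ)) →
      F (lab (lbl e)) (lab ℓ) → FlowOk Γ ϱ F (run ℓ e)
  | runIn : ∀ ℓ e ρ, FlowOk Γ ϱ F e → FlowOkEnv Γ ϱ F ρ →
      (∀ e', AbsVal.BOX e' ∈ Γ (lbl e) → F (lab (lbl e')) (lab ℓ)) →
      F (lab (lbl e)) (lab ℓ) → FlowOk Γ ϱ F (runIn ℓ e ρ)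
  | hole : ∀ ℓ, FlowOk Γ ϱ F (hole ℓ)

/-- Flow constraints for an explicit environment. -/
inductive FlowOkEnv (Γ : AbsCache) (ϱ : AbsEnvMap) (F : Node → Node → Prop) :
    (String → LExp) → Prop where
  | intro : ∀ ρ, (∀ x, FlowOk Γ ϱ F (ρ x)) → (∀ x, F (lab (lbl (ρ x))) (nm x)) →
      FlowOkEnv Γ ϱ F ρ
end

/-- `Γ, ϱ, ⤳ ⊨_IF e`: 0CFA acceptability together with the flow constraints. -/
def SatIF (Γ : AbsCache) (ϱ : AbsEnvMap) (F : Node → Node → Prop) (e : LExp) : Prop :=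
  CfaAcc Γ ϱ e ∧ FlowOk Γ ϱ F e

/-- A stage-0 value built only from markers and constants. -/
inductive MCVal : LExp → Prop where
  | const : ∀ ℓ k, MCVal (LExp.const ℓ k)
  | mark : ∀ ℓ m v, MCVal v → MCVal (LExp.mark ℓ m v)

open Classical in
/-- `M`-erasure on labelled expressions. -/
noncomputable def eraseL (M : Set Marker) : LExp → LExp
  | .const ℓ k => .const ℓ k
  | .var ℓ x => .var ℓ x
  | .fn ℓ x e => .fn ℓ x (eraseL M e)
  | .app ℓ e1 e2 => .app ℓ (eraseL M e1) (eraseL M e2)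
  | .box ℓ e => .box ℓ (eraseL M e)
  | .unbox ℓ e => .unbox ℓ (eraseL M e)
  | .run ℓ e => .run ℓ (eraseL M e)
  | .ite ℓ e1 e2 e3 => .ite ℓ (eraseL M e1) (eraseL M e2) (eraseL M e3)
  | .clos ℓ e ρ => .clos ℓ (eraseL M e) (fun x => eraseL M (ρ x))
  | .runIn ℓ e ρ => .runIn ℓ (eraseL M e) (fun x => eraseL M (ρ x))
  | .mark ℓ m e => if m ∈ M then .mark ℓ m (eraseL M e) else .hole ℓ
  | .hole ℓ => .hole ℓ

/-- The set of markers occurring in a labelled expression. -/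
def markersL : LExp → Set Marker
  | .const _ _ => ∅
  | .var _ _ => ∅
  | .fn _ _ e => markersL e
  | .app _ e1 e2 => markersL e1 ∪ markersL e2
  | .box _ e => markersL e
  | .unbox _ e => markersL e
  | .run _ e => markersL e
  | .ite _ e1 e2 e3 => markersL e1 ∪ markersL e2 ∪ markersL e3
  | .clos _ e ρ => markersL e ∪ ⋃ x, markersL (ρ x)
  | .runIn _ e ρ => markersL e ∪ ⋃ x, markersL (ρ x)
  | .mark _ m e => insert m (markersL e)
  | .hole _ => ∅


open LExp Node

section
variable {Γ : AbsCache} {ϱ : AbsEnvMap}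

lemma lbl_setLbl (e : LExp) (ℓ : Label) : (e.setLbl ℓ).lbl = ℓ := by cases e <;> rfl

lemma lbl_cl (e : LExp) (ρ : String → LExp) : (LExp.cl e ρ).lbl = e.lbl := rfl

lemma lblEvSucc : ∀ {m : Nat} {e e' : LExp}, Ev (m+1) e e' → e'.lbl = e.lbl := by
  intro m e e' h
  cases h
  case red r => cases r <;> first | rfl | exact lbl_setLbl _ _
  all_goals rfl

/-- Shape invariant for abstract values approximating terms. -/
def Shape (Γ : AbsCache) (ϱ : AbsEnvMap) (ν : AbsVal) : LExp → Prop
  | .const _ k => ν = absConst k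
  | .fn _ x b => (∃ b0, ν = .FUN x b0 ∧ b0.lbl = b.lbl) ∧ (∀ ℓ', Approx Γ ϱ ν (.fn ℓ' x b))
  | .box _ e => (∃ e0, ν = .BOX e0 ∧ e0.lbl = e.lbl) ∧ (∀ ℓ', Approx Γ ϱ ν (.box ℓ' e))
  | .clos _ t ρ => Shape Γ ϱ ν t ∧ AccEnv Γ ϱ ρ
  | _ => False

lemma shape_step : ∀ {n : Nat} {t t' : LExp}, Ev n t t' →
    ∀ {ν : AbsVal}, Shape Γ ϱ ν t → Shape Γ ϱ ν t' := by
  intro n t t' h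
  induction h with
  | red n e e' r =>
    intro ν hs
    cases r with
    | constE n ℓ ℓ1 k ρ => exact hs.1
    | fnE n ℓ ℓ1 x e ρ =>
      obtain ⟨⟨⟨b0, hb0, hlbl⟩, happ⟩, hacc⟩ := hs
      exact ⟨⟨b0, hb0, hlbl⟩,
        fun ℓ' => Approx.redA _ _ _ _ (Approx.closA ℓ' ν _ ρ (happ ℓ1) hacc)
          (Ev.red _ _ _ (Red.fnE n ℓ' ℓ1 x e ρ))⟩
    | boxE n ℓ ℓ1 e ρ =>
      obtain ⟨⟨⟨e0, he0, hlbl⟩, happ⟩, hacc⟩ := hs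
      exact ⟨⟨e0, he0, hlbl⟩,
        fun ℓ' => Approx.redA _ _ _ _ (Approx.closA ℓ' ν _ ρ (happ ℓ1) hacc)
          (Ev.red _ _ _ (Red.boxE n ℓ' ℓ1 e ρ))⟩
    | varE => exact hs.1.elim
    | appE => exact hs.1.elim
    | unboxE => exact hs.1.elim
    | runE0 => exact hs.1.elim
    | runES => exact hs.1.elim
    | iteE => exact hs.1.elim
    | markE => exact hs.1.elim
    | holeE => exact hs.1.elim
    | lookup => exact hs.1.elim
    | apply => exact hs.elim
    | unboxR => exact hs.elim
    | runR => exact hs.elim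
    | ifTrue => exact hs.elim
    | ifFalse => exact hs.elim
    | liftApp => exact hs.elim
    | liftIf => exact hs.elim
    | liftUnbox => exact hs.elim
    | liftRunIn => exact hs.elim
  | appL m ℓ e1 e1' e2 h ih => exact fun hs => hs.elim
  | appR m ℓ v e e' hv h ih => exact fun hs => hs.elim
  | fnB m ℓ x e e' h ih =>
    intro ν hs
    obtain ⟨⟨b0, hb0, hlbl⟩, happ⟩ := hs
    exact ⟨⟨b0, hb0, hlbl.trans (lblEvSucc h).symm⟩,
      fun ℓ' => Approx.redA _ _ _ _ (happ ℓ') (Ev.fnB m ℓ' x e e' h)⟩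
  | boxC m ℓ e e' h ih =>
    intro ν hs
    obtain ⟨⟨e0, he0, hlbl⟩, happ⟩ := hs
    exact ⟨⟨e0, he0, hlbl.trans (lblEvSucc h).symm⟩,
      fun ℓ' => Approx.redA _ _ _ _ (happ ℓ') (Ev.boxC m ℓ' e e' h)⟩
  | unboxC m ℓ e e' h ih => exact fun hs => hs.elim
  | runC m ℓ e e' h ih => exact fun hs => hs.elim
  | runInC m ℓ e e' ρ h ih => exact fun hs => hs.elim
  | closC m ℓ e e' ρ h ih => exact fun hs => ⟨ih hs.1, hs.2⟩
  | iteG m ℓ e1 e1' e2 e3 h ih => exact fun hs => hs.elim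
  | iteT m ℓ v e2 e2' e3 hv h ih => exact fun hs => hs.elim
  | iteF m ℓ v1 v2 e3 e3' hv1 hv2 h ih => exact fun hs => hs.elim
  | markC m ℓ mk e e' h ih => exact fun hs => hs.elim

lemma approx_shape {ν : AbsVal} {t : LExp} (h : Approx Γ ϱ ν t) : Shape Γ ϱ ν t :=
  Approx.rec (motive_1 := fun _ _ => True) (motive_2 := fun _ _ => True)
    (motive_3 := fun ν t _ => Shape Γ ϱ ν t)
    (fun _ _ _ => trivial) (fun _ _ _ => trivial)
    (fun _ _ _ _ _ _ _ _ _ => trivial) (fun _ _ _ _ _ _ _ _ => trivial)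
    (fun _ _ _ _ _ _ _ _ => trivial) (fun _ _ _ _ _ => trivial)
    (fun _ _ _ _ _ => trivial) (fun _ _ _ _ _ _ _ _ => trivial)
    (fun _ _ _ _ _ _ _ _ _ _ _ _ => trivial) (fun _ _ _ _ _ _ _ _ => trivial)
    (fun _ _ _ _ _ _ => trivial) (fun _ => trivial)
    (fun _ _ _ _ => trivial)
    (fun _ k => rfl)
    (fun _ x e => ⟨⟨e, rfl, rfl⟩, fun ℓ' => Approx.funA ℓ' x e⟩)
    (fun _ e => ⟨⟨e, rfl, rfl⟩, fun ℓ' => Approx.boxA ℓ' e⟩)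
    (fun _ _ _ _ _ hEv ih => shape_step hEv ih)
    (fun _ _ _ _ _ hacc ih _ => ⟨ih, hacc⟩)
    h

end

section
variable {Γ : AbsCache} {ϱ : AbsEnvMap} {F G : Node → Node → Prop}
open LExp Node

lemma flowok_mono (hFG : ∀ a b, F a b → G a b) :
    ∀ e : LExp, FlowOk Γ ϱ F e → FlowOk Γ ϱ G e := by
  intro e
  induction e with
  | const ℓ k => exact fun _ => FlowOk.const ℓ k
  | var ℓ x => intro h; cases h with | var _ _ hf => exact FlowOk.var ℓ x (hFG _ _ hf)
  | fn ℓ x e ih => intro h; cases h with | fn _ _ _ he => exact FlowOk.fn ℓ x e (ih he)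
  | app ℓ e1 e2 ih1 ih2 =>
    intro h; cases h with | app _ _ _ h1 h2 hc hf =>
    exact FlowOk.app ℓ e1 e2 (ih1 h1) (ih2 h2)
      (fun x b hb => ⟨hFG _ _ (hc x b hb).1, hFG _ _ (hc x b hb).2⟩) (hFG _ _ hf)
  | box ℓ e ih => intro h; cases h with | box _ _ he => exact FlowOk.box ℓ e (ih he)
  | unbox ℓ e ih =>
    intro h; cases h with | unbox _ _ he hc hf =>
    exact FlowOk.unbox ℓ e (ih he) (fun e' hb => hFG _ _ (hc e' hb)) (hFG _ _ hf)
  | run ℓ e ih =>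
    intro h; cases h with | run _ _ he hc hf =>
    exact FlowOk.run ℓ e (ih he) (fun e' hb => hFG _ _ (hc e' hb)) (hFG _ _ hf)
  | ite ℓ e1 e2 e3 ih1 ih2 ih3 =>
    intro h; cases h with | ite _ _ _ _ h1 h2 h3 f2 f3 f1 =>
    exact FlowOk.ite ℓ e1 e2 e3 (ih1 h1) (ih2 h2) (ih3 h3)
      (hFG _ _ f2) (hFG _ _ f3) (hFG _ _ f1)
  | clos ℓ e ρ ihe ihρ =>
    intro h; cases h with | clos _ _ _ he hρ hf =>
    cases hρ with | intro _ h1 h2 =>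
    exact FlowOk.clos ℓ e ρ (ihe he)
      (FlowOkEnv.intro ρ (fun x => ihρ x (h1 x)) (fun x => hFG _ _ (h2 x))) (hFG _ _ hf)
  | runIn ℓ e ρ ihe ihρ =>
    intro h; cases h with | runIn _ _ _ he hρ hc hf =>
    cases hρ with | intro _ h1 h2 =>
    exact FlowOk.runIn ℓ e ρ (ihe he)
      (FlowOkEnv.intro ρ (fun x => ihρ x (h1 x)) (fun x => hFG _ _ (h2 x)))
      (fun e' hb => hFG _ _ (hc e' hb)) (hFG _ _ hf)
  | mark ℓ m e ih =>
    intro h; cases h with | mark _ _ _ he f1 f2 =>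
    exact FlowOk.mark ℓ m e (ih he) (hFG _ _ f1) (hFG _ _ f2)
  | hole ℓ => exact fun _ => FlowOk.hole ℓ

lemma cfa_setLbl {e : LExp} {ℓ : Label} (h : CfaAcc Γ ϱ e) (hs : Γ e.lbl ⊆ Γ ℓ) :
    CfaAcc Γ ϱ (e.setLbl ℓ) := by
  cases h with
  | const ℓ1 k hk => exact CfaAcc.const ℓ k (hs hk)
  | var ℓ1 x h1 => exact CfaAcc.var ℓ x (fun a ha => hs (h1 ha))
  | fn ℓ1 x e ν hCe hν hApp =>
    exact CfaAcc.fn ℓ x e ν hCe (hs hν) ((approx_shape hApp).2 ℓ)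
  | app ℓ1 e1 e2 h1 h2 hc =>
    exact CfaAcc.app ℓ e1 e2 h1 h2
      (fun x b hb => ⟨(hc x b hb).1, fun a ha => hs ((hc x b hb).2 ha)⟩)
  | box ℓ1 e ν hCe hν hApp =>
    exact CfaAcc.box ℓ e ν hCe (hs hν) ((approx_shape hApp).2 ℓ)
  | unbox ℓ1 e h1 hc =>
    exact CfaAcc.unbox ℓ e h1 (fun e' hb a ha => hs (hc e' hb ha))
  | run ℓ1 e h1 hc =>
    exact CfaAcc.run ℓ e h1 (fun e' hb a ha => hs (hc e' hb ha))
  | runIn ℓ1 e ρ h1 hρ hc =>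
    exact CfaAcc.runIn ℓ e ρ h1 hρ (fun e' hb a ha => hs (hc e' hb ha))
  | ite ℓ1 e1 e2 e3 h1 h2 h3 s2 s3 =>
    exact CfaAcc.ite ℓ e1 e2 e3 h1 h2 h3
      (fun a ha => hs (s2 ha)) (fun a ha => hs (s3 ha))
  | clos ℓ1 e ρ h1 hρ s1 =>
    exact CfaAcc.clos ℓ e ρ h1 hρ (fun a ha => hs (s1 ha))
  | mark ℓ1 m e h1 s1 =>
    exact CfaAcc.mark ℓ m e h1 (fun a ha => hs (s1 ha))
  | hole ℓ1 => exact CfaAcc.hole ℓ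

lemma flow_setLbl (htrans : ∀ {a b c}, G a b → G b c → G a c)
    {e : LExp} {ℓ : Label} (h : FlowOk Γ ϱ G e) (hf : G (lab e.lbl) (lab ℓ)) :
    FlowOk Γ ϱ G (e.setLbl ℓ) := by
  cases h with
  | const ℓ1 k => exact FlowOk.const ℓ k
  | var ℓ1 x h1 => exact FlowOk.var ℓ x (htrans h1 hf)
  | fn ℓ1 x e h1 => exact FlowOk.fn ℓ x e h1
  | app ℓ1 e1 e2 h1 h2 hc f1 =>
    exact FlowOk.app ℓ e1 e2 h1 h2
      (fun x b hb => ⟨(hc x b hb).1, htrans (hc x b hb).2 hf⟩) (htrans f1 hf)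
  | ite ℓ1 e1 e2 e3 h1 h2 h3 f2 f3 f1 =>
    exact FlowOk.ite ℓ e1 e2 e3 h1 h2 h3 (htrans f2 hf) (htrans f3 hf) (htrans f1 hf)
  | clos ℓ1 e ρ h1 hρ f1 => exact FlowOk.clos ℓ e ρ h1 hρ (htrans f1 hf)
  | mark ℓ1 m e h1 f1 f2 =>
    exact FlowOk.mark ℓ m e h1 (htrans f1 hf) (htrans f2 hf)
  | box ℓ1 e h1 => exact FlowOk.box ℓ e h1
  | unbox ℓ1 e h1 hc f1 =>
    exact FlowOk.unbox ℓ e h1 (fun e' hb => htrans (hc e' hb) hf) (htrans f1 hf)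
  | run ℓ1 e h1 hc f1 =>
    exact FlowOk.run ℓ e h1 (fun e' hb => htrans (hc e' hb) hf) (htrans f1 hf)
  | runIn ℓ1 e ρ h1 hρ hc f1 =>
    exact FlowOk.runIn ℓ e ρ h1 hρ (fun e' hb => htrans (hc e' hb) hf) (htrans f1 hf)
  | hole ℓ1 => exact FlowOk.hole ℓ

end

section
variable {Γ : AbsCache} {ϱ : AbsEnvMap} {G : Node → Node → Prop}
open LExp Node

lemma accEnv_update {ρ : String → LExp} {x : String} {v : LExp}
    (h : AccEnv Γ ϱ ρ) (hv : CfaAcc Γ ϱ v) (hs : Γ v.lbl ⊆ ϱ x) :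
    AccEnv Γ ϱ (Function.update ρ x v) := by
  cases h with | intro _ h1 h2 =>
  refine AccEnv.intro _ (fun y => ?_) (fun y => ?_)
  · rcases eq_or_ne y x with rfl | hne
    · rwa [Function.update_self]
    · rw [Function.update_of_ne hne]; exact h1 y
  · rcases eq_or_ne y x with rfl | hne
    · rwa [Function.update_self]
    · rw [Function.update_of_ne hne]; exact h2 y

lemma flowEnv_update {ρ : String → LExp} {x : String} {v : LExp}
    (h : FlowOkEnv Γ ϱ G ρ) (hv : FlowOk Γ ϱ G v) (hg : G (Node.lab v.lbl) (Node.nm x)) :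
    FlowOkEnv Γ ϱ G (Function.update ρ x v) := by
  cases h with | intro _ h1 h2 =>
  refine FlowOkEnv.intro _ (fun y => ?_) (fun y => ?_)
  · rcases eq_or_ne y x with rfl | hne
    · rwa [Function.update_self]
    · rw [Function.update_of_ne hne]; exact h1 y
  · rcases eq_or_ne y x with rfl | hne
    · rwa [Function.update_self]
    · rw [Function.update_of_ne hne]; exact h2 y

theorem preserve (hrefl : ∀ a, G a a) (htrans : ∀ {a b c}, G a b → G b c → G a c) :
    ∀ {n : Nat} {e e' : LExp}, Ev n e e' → CfaAcc Γ ϱ e → FlowOk Γ ϱ G e →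
      CfaAcc Γ ϱ e' ∧ FlowOk Γ ϱ G e' ∧ Γ e'.lbl ⊆ Γ e.lbl ∧
        G (Node.lab e'.lbl) (Node.lab e.lbl) := by
  intro n e e' hEv
  induction hEv with
  | red n e e' r =>
    intro hC hF
    cases r with
    | constE n ℓ ℓ1 k ρ =>
      cases hC with | clos _ _ _ hC1 hAcc hsub =>
      cases hC1 with | const _ _ hk =>
      exact ⟨CfaAcc.const ℓ k (hsub hk), FlowOk.const ℓ k, fun a ha => ha, hrefl _⟩
    | varE n ℓ ℓ1 x ρ =>
      cases hC with | clos _ _ _ hC1 hAcc hsub =>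
      cases hC1 with | var _ _ h1 =>
      cases hF with | clos _ _ _ hF1 hFEnv hf =>
      cases hF1 with | var _ _ g1 =>
      exact ⟨CfaAcc.var ℓ x (fun a ha => hsub (h1 ha)), FlowOk.var ℓ x (htrans g1 hf),
        fun a ha => ha, hrefl _⟩
    | fnE n ℓ ℓ1 x e ρ =>
      cases hC with | clos _ _ _ hC1 hAcc hsub =>
      cases hC1 with | fn _ _ _ ν hCe hν hApp =>
      cases hF with | clos _ _ _ hF1 hFEnv hf =>
      cases hF1 with | fn _ _ _ hFe =>
      exact ⟨CfaAcc.fn ℓ x (cl e ρ) ν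
          (CfaAcc.clos e.lbl e ρ hCe hAcc (fun a ha => ha)) (hsub hν)
          (Approx.redA _ _ _ _ (Approx.closA ℓ ν _ ρ hApp hAcc)
            (Ev.red _ _ _ (Red.fnE n ℓ ℓ1 x e ρ))),
        FlowOk.fn ℓ x (cl e ρ) (FlowOk.clos e.lbl e ρ hFe hFEnv (hrefl _)),
        fun a ha => ha, hrefl _⟩
    | appE n ℓ ℓ1 e1 e2 ρ =>
      cases hC with | clos _ _ _ hC1 hAcc hsub =>
      cases hC1 with | app _ _ _ hA1 hA2 hApc =>
      cases hF with | clos _ _ _ hF1 hFEnv hf =>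
      cases hF1 with | app _ _ _ hG1 hG2 hGc hg1 =>
      exact ⟨CfaAcc.app ℓ (cl e1 ρ) (cl e2 ρ)
          (CfaAcc.clos e1.lbl e1 ρ hA1 hAcc (fun a ha => ha))
          (CfaAcc.clos e2.lbl e2 ρ hA2 hAcc (fun a ha => ha))
          (fun x b hb => ⟨(hApc x b hb).1, fun a ha => hsub ((hApc x b hb).2 ha)⟩),
        FlowOk.app ℓ (cl e1 ρ) (cl e2 ρ)
          (FlowOk.clos e1.lbl e1 ρ hG1 hFEnv (hrefl _))
          (FlowOk.clos e2.lbl e2 ρ hG2 hFEnv (hrefl _))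
          (fun x b hb => ⟨(hGc x b hb).1, htrans (hGc x b hb).2 hf⟩) (htrans hg1 hf),
        fun a ha => ha, hrefl _⟩
    | boxE n ℓ ℓ1 e ρ =>
      cases hC with | clos _ _ _ hC1 hAcc hsub =>
      cases hC1 with | box _ _ ν hCe hν hApp =>
      cases hF with | clos _ _ _ hF1 hFEnv hf =>
      cases hF1 with | box _ _ hFe =>
      exact ⟨CfaAcc.box ℓ (cl e ρ) ν
          (CfaAcc.clos e.lbl e ρ hCe hAcc (fun a ha => ha)) (hsub hν)
          (Approx.redA _ _ _ _ (Approx.closA ℓ ν _ ρ hApp hAcc)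
            (Ev.red _ _ _ (Red.boxE n ℓ ℓ1 e ρ))),
        FlowOk.box ℓ (cl e ρ) (FlowOk.clos e.lbl e ρ hFe hFEnv (hrefl _)),
        fun a ha => ha, hrefl _⟩
    | unboxE n ℓ ℓ1 e ρ =>
      cases hC with | clos _ _ _ hC1 hAcc hsub =>
      cases hC1 with | unbox _ _ hCe hCc =>
      cases hF with | clos _ _ _ hF1 hFEnv hf =>
      cases hF1 with | unbox _ _ hFe hFc hf1 =>
      exact ⟨CfaAcc.unbox ℓ (cl e ρ)
          (CfaAcc.clos e.lbl e ρ hCe hAcc (fun a ha => ha))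
          (fun e' hb a ha => hsub (hCc e' hb ha)),
        FlowOk.unbox ℓ (cl e ρ) (FlowOk.clos e.lbl e ρ hFe hFEnv (hrefl _))
          (fun e' hb => htrans (hFc e' hb) hf) (htrans hf1 hf),
        fun a ha => ha, hrefl _⟩
    | runE0 ℓ ℓ1 e ρ =>
      cases hC with | clos _ _ _ hC1 hAcc hsub =>
      cases hC1 with | run _ _ hCe hCc =>
      cases hF with | clos _ _ _ hF1 hFEnv hf =>
      cases hF1 with | run _ _ hFe hFc hf1 =>
      exact ⟨CfaAcc.runIn ℓ (cl e ρ) ρ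
          (CfaAcc.clos e.lbl e ρ hCe hAcc (fun a ha => ha)) hAcc
          (fun e' hb a ha => hsub (hCc e' hb ha)),
        FlowOk.runIn ℓ (cl e ρ) ρ (FlowOk.clos e.lbl e ρ hFe hFEnv (hrefl _)) hFEnv
          (fun e' hb => htrans (hFc e' hb) hf) (htrans hf1 hf),
        fun a ha => ha, hrefl _⟩
    | runES n ℓ ℓ1 e ρ =>
      cases hC with | clos _ _ _ hC1 hAcc hsub =>
      cases hC1 with | run _ _ hCe hCc =>
      cases hF with | clos _ _ _ hF1 hFEnv hf =>
      cases hF1 with | run _ _ hFe hFc hf1 =>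
      exact ⟨CfaAcc.run ℓ (cl e ρ)
          (CfaAcc.clos e.lbl e ρ hCe hAcc (fun a ha => ha))
          (fun e' hb a ha => hsub (hCc e' hb ha)),
        FlowOk.run ℓ (cl e ρ) (FlowOk.clos e.lbl e ρ hFe hFEnv (hrefl _))
          (fun e' hb => htrans (hFc e' hb) hf) (htrans hf1 hf),
        fun a ha => ha, hrefl _⟩
    | iteE n ℓ ℓ1 e1 e2 e3 ρ =>
      cases hC with | clos _ _ _ hC1 hAcc hsub =>
      cases hC1 with | ite _ _ _ _ h1 h2 h3 s2 s3 =>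
      cases hF with | clos _ _ _ hF1 hFEnv hf =>
      cases hF1 with | ite _ _ _ _ g1 g2 g3 f2 f3 f1 =>
      exact ⟨CfaAcc.ite ℓ (cl e1 ρ) (cl e2 ρ) (cl e3 ρ)
          (CfaAcc.clos e1.lbl e1 ρ h1 hAcc (fun a ha => ha))
          (CfaAcc.clos e2.lbl e2 ρ h2 hAcc (fun a ha => ha))
          (CfaAcc.clos e3.lbl e3 ρ h3 hAcc (fun a ha => ha))
          (fun a ha => hsub (s2 ha)) (fun a ha => hsub (s3 ha)),
        FlowOk.ite ℓ (cl e1 ρ) (cl e2 ρ) (cl e3 ρ)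
          (FlowOk.clos e1.lbl e1 ρ g1 hFEnv (hrefl _))
          (FlowOk.clos e2.lbl e2 ρ g2 hFEnv (hrefl _))
          (FlowOk.clos e3.lbl e3 ρ g3 hFEnv (hrefl _))
          (htrans f2 hf) (htrans f3 hf) (htrans f1 hf),
        fun a ha => ha, hrefl _⟩
    | markE n ℓ ℓ1 m e ρ =>
      cases hC with | clos _ _ _ hC1 hAcc hsub =>
      cases hC1 with | mark _ _ _ hCe s1 =>
      cases hF with | clos _ _ _ hF1 hFEnv hf =>
      cases hF1 with | mark _ _ _ hFe f1 f2 =>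
      exact ⟨CfaAcc.mark ℓ m (cl e ρ)
          (CfaAcc.clos e.lbl e ρ hCe hAcc (fun a ha => ha)) (fun a ha => hsub (s1 ha)),
        FlowOk.mark ℓ m (cl e ρ) (FlowOk.clos e.lbl e ρ hFe hFEnv (hrefl _))
          (htrans f1 hf) (htrans f2 hf),
        fun a ha => ha, hrefl _⟩
    | holeE n ℓ ℓ1 ρ =>
      exact ⟨CfaAcc.hole ℓ, FlowOk.hole ℓ, fun a ha => ha, hrefl _⟩
    | lookup ℓ ℓ1 x ρ =>
      cases hC with | clos _ _ _ hC1 hAcc hsub =>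
      cases hC1 with | var _ _ h1 =>
      cases hF with | clos _ _ _ hF1 hFEnv hf =>
      cases hF1 with | var _ _ g1 =>
      cases hAcc with | intro _ a1 a2 =>
      cases hFEnv with | intro _ b1 b2 =>
      have hsub' : Γ (ρ x).lbl ⊆ Γ ℓ := fun a ha => hsub (h1 (a2 x ha))
      have hg : G (Node.lab (ρ x).lbl) (Node.lab ℓ) := htrans (b2 x) (htrans g1 hf)
      refine ⟨cfa_setLbl (a1 x) hsub', flow_setLbl @htrans (b1 x) hg, ?_, ?_⟩
      · rw [lbl_setLbl]; exact fun a ha => ha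
      · rw [lbl_setLbl]; exact hrefl _
    | apply ℓ2 ℓ3 ℓf x b ρ v hval =>
      cases hC with | app _ _ _ hC1 hC2 hCc =>
      cases hC1 with | clos _ _ _ hCfn hAcc hs21 =>
      cases hCfn with | fn _ _ _ ν hCb hν hApp =>
      obtain ⟨⟨b0, rfl, hlbl⟩, -⟩ := approx_shape hApp
      have hfun : AbsVal.FUN x b0 ∈ Γ ℓ2 := hs21 hν
      obtain ⟨hvsub, hbsub⟩ := hCc x b0 hfun
      rw [hlbl] at hbsub
      cases hF with | app _ _ _ hF1 hF2 hFc hf1 =>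
      cases hF1 with | clos _ _ _ hFfn hFEnv hf2 =>
      cases hFfn with | fn _ _ _ hFb =>
      obtain ⟨gv, gb⟩ := hFc x b0 hfun
      rw [hlbl] at gb
      exact ⟨CfaAcc.clos b.lbl b _ hCb (accEnv_update hAcc hC2 hvsub) (fun a ha => ha),
        FlowOk.clos b.lbl b _ hFb (flowEnv_update hFEnv hF2 gv) (hrefl _), hbsub, gb⟩
    | unboxR ℓ1 ℓ2 v hval =>
      cases hC with | unbox _ _ hC1 hCc =>
      cases hC1 with | box _ _ ν hCv hν hApp =>
      obtain ⟨⟨e0, rfl, hlbl⟩, -⟩ := approx_shape hApp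
      have hsubv : Γ v.lbl ⊆ Γ ℓ2 := by rw [← hlbl]; exact hCc e0 hν
      cases hF with | unbox _ _ hF1 hFc hf1 =>
      cases hF1 with | box _ _ hFv =>
      have hgv : G (Node.lab v.lbl) (Node.lab ℓ2) := by rw [← hlbl]; exact hFc e0 hν
      refine ⟨cfa_setLbl hCv hsubv, flow_setLbl @htrans hFv hgv, ?_, ?_⟩
      · rw [lbl_setLbl]; exact fun a ha => ha
      · rw [lbl_setLbl]; exact hrefl _
    | runR ℓ1 ℓ2 v ρ hval =>
      cases hC with | runIn _ _ _ hC1 hAcc hCc =>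
      cases hC1 with | box _ _ ν hCv hν hApp =>
      obtain ⟨⟨e0, rfl, hlbl⟩, -⟩ := approx_shape hApp
      have hsubv : Γ v.lbl ⊆ Γ ℓ2 := by rw [← hlbl]; exact hCc e0 hν
      cases hF with | runIn _ _ _ hF1 hFEnv hFc hf1 =>
      cases hF1 with | box _ _ hFv =>
      have hgv : G (Node.lab v.lbl) (Node.lab ℓ2) := by rw [← hlbl]; exact hFc e0 hν
      exact ⟨CfaAcc.clos ℓ2 v ρ hCv hAcc hsubv, FlowOk.clos ℓ2 v ρ hFv hFEnv hgv,
        fun a ha => ha, hrefl _⟩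
    | ifTrue ℓ ℓg e1 e2 =>
      cases hC with | ite _ _ _ _ h1 h2 h3 s2 s3 =>
      cases hF with | ite _ _ _ _ g1 g2 g3 f2 f3 f1 =>
      exact ⟨h2, g2, s2, f2⟩
    | ifFalse ℓ ℓg e1 e2 =>
      cases hC with | ite _ _ _ _ h1 h2 h3 s2 s3 =>
      cases hF with | ite _ _ _ _ g1 g2 g3 f2 f3 f1 =>
      exact ⟨h3, g3, s3, f3⟩
    | liftApp ℓ2 ℓ3 ℓm m t ρ v hval =>
      cases hC with | app _ _ _ hC1 hC2 hCc =>
      cases hC1 with | clos _ _ _ hCm hAcc hs2 =>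
      cases hCm with | mark _ _ _ hCt hst =>
      cases hF with | app _ _ _ hF1 hF2 hFc hf1 =>
      cases hF1 with | clos _ _ _ hFm hFEnv hg2 =>
      cases hFm with | mark _ _ _ hFt gt gm =>
      have hsub2 : Γ t.lbl ⊆ Γ ℓ2 := fun a ha => hs2 (hst ha)
      exact ⟨CfaAcc.mark ℓ3 m (LExp.app ℓ3 (cl t ρ) v)
          (CfaAcc.app ℓ3 (cl t ρ) v
            (CfaAcc.clos t.lbl t ρ hCt hAcc (fun a ha => ha)) hC2
            (fun x b hb => hCc x b (hsub2 hb)))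
          (fun a ha => ha),
        FlowOk.mark ℓ3 m (LExp.app ℓ3 (cl t ρ) v)
          (FlowOk.app ℓ3 (cl t ρ) v
            (FlowOk.clos t.lbl t ρ hFt hFEnv (hrefl _)) hF2
            (fun x b hb => hFc x b (hsub2 hb)) (htrans gt (htrans hg2 hf1)))
          (hrefl _) (htrans gm (htrans hg2 hf1)),
        fun a ha => ha, hrefl _⟩
    | liftIf ℓ ℓ0 m v e1 e2 hval =>
      cases hC with | ite _ _ _ _ h1 h2 h3 s2 s3 =>
      cases h1 with | mark _ _ _ hCv sv =>
      cases hF with | ite _ _ _ _ g1 g2 g3 f2 f3 f1 =>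
      cases g1 with | mark _ _ _ hFv gv gm =>
      exact ⟨CfaAcc.mark ℓ m (LExp.ite ℓ v e1 e2)
          (CfaAcc.ite ℓ v e1 e2 hCv h2 h3 s2 s3) (fun a ha => ha),
        FlowOk.mark ℓ m (LExp.ite ℓ v e1 e2)
          (FlowOk.ite ℓ v e1 e2 hFv g2 g3 f2 f3 (htrans gv f1))
          (hrefl _) (htrans gm f1),
        fun a ha => ha, hrefl _⟩
    | liftUnbox ℓ1 ℓ2 m v hval =>
      cases hC with | unbox _ _ hC1 hCc =>
      cases hC1 with | mark _ _ _ hCv sv =>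
      cases hF with | unbox _ _ hF1 hFc hf1 =>
      cases hF1 with | mark _ _ _ hFv gv gm =>
      exact ⟨CfaAcc.mark ℓ2 m (LExp.unbox ℓ2 v)
          (CfaAcc.unbox ℓ2 v hCv (fun e' hb => hCc e' (sv hb))) (fun a ha => ha),
        FlowOk.mark ℓ2 m (LExp.unbox ℓ2 v)
          (FlowOk.unbox ℓ2 v hFv (fun e' hb => hFc e' (sv hb)) (htrans gv hf1))
          (hrefl _) (htrans gm hf1),
        fun a ha => ha, hrefl _⟩
    | liftRunIn ℓ1 ℓ2 m v ρ hval =>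
      cases hC with | runIn _ _ _ hC1 hAcc hCc =>
      cases hC1 with | mark _ _ _ hCv sv =>
      cases hF with | runIn _ _ _ hF1 hFEnv hFc hf1 =>
      cases hF1 with | mark _ _ _ hFv gv gm =>
      exact ⟨CfaAcc.mark ℓ2 m (LExp.runIn ℓ2 v ρ)
          (CfaAcc.runIn ℓ2 v ρ hCv hAcc (fun e' hb => hCc e' (sv hb))) (fun a ha => ha),
        FlowOk.mark ℓ2 m (LExp.runIn ℓ2 v ρ)
          (FlowOk.runIn ℓ2 v ρ hFv hFEnv (fun e' hb => hFc e' (sv hb)) (htrans gv hf1))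
          (hrefl _) (htrans gm hf1),
        fun a ha => ha, hrefl _⟩
  | appL m ℓ e1 e1' e2 h ih =>
    intro hC hF
    cases hC with | app _ _ _ h1 h2 hc =>
    cases hF with | app _ _ _ g1 g2 gc gf =>
    obtain ⟨C1, F1, S1, G1⟩ := ih h1 g1
    exact ⟨CfaAcc.app ℓ e1' e2 C1 h2 (fun x b hb => hc x b (S1 hb)),
      FlowOk.app ℓ e1' e2 F1 g2 (fun x b hb => gc x b (S1 hb)) (htrans G1 gf),
      fun a ha => ha, hrefl _⟩
  | appR m ℓ v e e' hv h ih =>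
    intro hC hF
    cases hC with | app _ _ _ h1 h2 hc =>
    cases hF with | app _ _ _ g1 g2 gc gf =>
    obtain ⟨C2, F2, S2, G2⟩ := ih h2 g2
    exact ⟨CfaAcc.app ℓ v e' h1 C2
        (fun x b hb => ⟨fun a ha => (hc x b hb).1 (S2 ha), (hc x b hb).2⟩),
      FlowOk.app ℓ v e' g1 F2
        (fun x b hb => ⟨htrans G2 (gc x b hb).1, (gc x b hb).2⟩) gf,
      fun a ha => ha, hrefl _⟩
  | fnB m ℓ x e e' h ih =>
    intro hC hF
    cases hC with | fn _ _ _ ν hCe hν hApp =>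
    cases hF with | fn _ _ _ hFe =>
    obtain ⟨C, F1, -, -⟩ := ih hCe hFe
    exact ⟨CfaAcc.fn ℓ x e' ν C hν
        (Approx.redA _ _ _ _ hApp (Ev.fnB m ℓ x e e' h)),
      FlowOk.fn ℓ x e' F1, fun a ha => ha, hrefl _⟩
  | boxC m ℓ e e' h ih =>
    intro hC hF
    cases hC with | box _ _ ν hCe hν hApp =>
    cases hF with | box _ _ hFe =>
    obtain ⟨C, F1, -, -⟩ := ih hCe hFe
    exact ⟨CfaAcc.box ℓ e' ν C hν
        (Approx.redA _ _ _ _ hApp (Ev.boxC m ℓ e e' h)),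
      FlowOk.box ℓ e' F1, fun a ha => ha, hrefl _⟩
  | unboxC m ℓ e e' h ih =>
    intro hC hF
    cases hC with | unbox _ _ hCe hCc =>
    cases hF with | unbox _ _ hFe hFc gf =>
    obtain ⟨C, F1, S, G1⟩ := ih hCe hFe
    exact ⟨CfaAcc.unbox ℓ e' C (fun x hb => hCc x (S hb)),
      FlowOk.unbox ℓ e' F1 (fun x hb => hFc x (S hb)) (htrans G1 gf),
      fun a ha => ha, hrefl _⟩
  | runC m ℓ e e' h ih =>
    intro hC hF
    cases hC with | run _ _ hCe hCc =>
    cases hF with | run _ _ hFe hFc gf =>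
    obtain ⟨C, F1, S, G1⟩ := ih hCe hFe
    exact ⟨CfaAcc.run ℓ e' C (fun x hb => hCc x (S hb)),
      FlowOk.run ℓ e' F1 (fun x hb => hFc x (S hb)) (htrans G1 gf),
      fun a ha => ha, hrefl _⟩
  | runInC m ℓ e e' ρ h ih =>
    intro hC hF
    cases hC with | runIn _ _ _ hCe hAcc hCc =>
    cases hF with | runIn _ _ _ hFe hFEnv hFc gf =>
    obtain ⟨C, F1, S, G1⟩ := ih hCe hFe
    exact ⟨CfaAcc.runIn ℓ e' ρ C hAcc (fun x hb => hCc x (S hb)),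
      FlowOk.runIn ℓ e' ρ F1 hFEnv (fun x hb => hFc x (S hb)) (htrans G1 gf),
      fun a ha => ha, hrefl _⟩
  | closC m ℓ e e' ρ h ih =>
    intro hC hF
    cases hC with | clos _ _ _ hCe hAcc hs =>
    cases hF with | clos _ _ _ hFe hFEnv gf =>
    obtain ⟨C, F1, S, G1⟩ := ih hCe hFe
    exact ⟨CfaAcc.clos ℓ e' ρ C hAcc (fun a ha => hs (S ha)),
      FlowOk.clos ℓ e' ρ F1 hFEnv (htrans G1 gf),
      fun a ha => ha, hrefl _⟩
  | iteG m ℓ e1 e1' e2 e3 h ih =>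
    intro hC hF
    cases hC with | ite _ _ _ _ h1 h2 h3 s2 s3 =>
    cases hF with | ite _ _ _ _ g1 g2 g3 f2 f3 f1 =>
    obtain ⟨C, F1, S, G1⟩ := ih h1 g1
    exact ⟨CfaAcc.ite ℓ e1' e2 e3 C h2 h3 s2 s3,
      FlowOk.ite ℓ e1' e2 e3 F1 g2 g3 f2 f3 (htrans G1 f1),
      fun a ha => ha, hrefl _⟩
  | iteT m ℓ v e2 e2' e3 hv h ih =>
    intro hC hF
    cases hC with | ite _ _ _ _ h1 h2 h3 s2 s3 =>
    cases hF with | ite _ _ _ _ g1 g2 g3 f2 f3 f1 =>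
    obtain ⟨C, F1, S, G1⟩ := ih h2 g2
    exact ⟨CfaAcc.ite ℓ v e2' e3 h1 C h3 (fun a ha => s2 (S ha)) s3,
      FlowOk.ite ℓ v e2' e3 g1 F1 g3 (htrans G1 f2) f3 f1,
      fun a ha => ha, hrefl _⟩
  | iteF m ℓ v1 v2 e3 e3' hv1 hv2 h ih =>
    intro hC hF
    cases hC with | ite _ _ _ _ h1 h2 h3 s2 s3 =>
    cases hF with | ite _ _ _ _ g1 g2 g3 f2 f3 f1 =>
    obtain ⟨C, F1, S, G1⟩ := ih h3 g3
    exact ⟨CfaAcc.ite ℓ v1 v2 e3' h1 h2 C s2 (fun a ha => s3 (S ha)),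
      FlowOk.ite ℓ v1 v2 e3' g1 g2 F1 f2 (htrans G1 f3) f1,
      fun a ha => ha, hrefl _⟩
  | markC m ℓ mk e e' h ih =>
    intro hC hF
    cases hC with | mark _ _ _ hCe s1 =>
    cases hF with | mark _ _ _ hFe f1 f2 =>
    obtain ⟨C, F1, S, G1⟩ := ih hCe hFe
    exact ⟨CfaAcc.mark ℓ mk e' C (fun a ha => s1 (S ha)),
      FlowOk.mark ℓ mk e' F1 (htrans G1 f1) f2,
      fun a ha => ha, hrefl _⟩

end

section
variable {Γ : AbsCache} {ϱ : AbsEnvMap} {G : Node → Node → Prop}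
open LExp Node

lemma mcval_flow (htrans : ∀ {a b c}, G a b → G b c → G a c) :
    ∀ {v : LExp}, MCVal v → FlowOk Γ ϱ G v →
      ∀ m ∈ markersL v, G (Node.mk m) (Node.lab v.lbl) := by
  intro v hv
  induction hv with
  | const ℓ k => intro _ m hm; simp [markersL] at hm
  | mark ℓ m' v' hmc ih =>
    intro hF m hm
    cases hF with | mark _ _ _ hFv f1 f2 =>
    rcases hm with rfl | hm'
    · exact f2
    · exact htrans (ih hFv m hm') f1

lemma erase_id {M : Set Marker} :
    ∀ {v : LExp}, MCVal v → (∀ m ∈ markersL v, m ∈ M) → eraseL M v = v := by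
  intro v hv
  induction hv with
  | const ℓ k => intro _; rfl
  | mark ℓ m' v' hmc ih =>
    intro h
    have hm' : m' ∈ M := h m' (Or.inl rfl)
    have : eraseL M v' = v' := ih (fun m hm => h m (Or.inr hm))
    simp [eraseL, hm', this]

end


/-- Information Flow Soundness: every marker in the final value flows to the
label of the original expression, so erasing at `M = { m | m ⤳* ℓ }` fixes it. -/
theorem if_soundness (Γ : AbsCache) (ϱ : AbsEnvMap)
    (F : Node → Node → Prop) (t v : LExp)
    (h : SatIF Γ ϱ F t) (hev : LExp.EvStar t v) (hv : MCVal v) :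
    eraseL {m : Marker | Relation.ReflTransGen F (Node.mk m) (Node.lab t.lbl)} v
      = v := by
  set G : Node → Node → Prop := fun a b => Relation.ReflTransGen F a b with hG
  have hrefl : ∀ a, G a a := fun a => Relation.ReflTransGen.refl
  have htrans : ∀ {a b c}, G a b → G b c → G a c := fun hab hbc => hab.trans hbc
  have key : CfaAcc Γ ϱ v ∧ FlowOk Γ ϱ G v ∧ G (Node.lab v.lbl) (Node.lab t.lbl) := by
    clear hv
    induction hev with
    | refl =>
      exact ⟨h.1, flowok_mono (fun a b hab => Relation.ReflTransGen.single hab) t h.2,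
        hrefl _⟩
    | tail hab hbc ih =>
      obtain ⟨C, Fk, Gk⟩ := ih
      obtain ⟨m, hm⟩ := hbc
      obtain ⟨C', F', -, G'⟩ := preserve hrefl @htrans hm C Fk
      exact ⟨C', F', htrans G' Gk⟩
  refine erase_id hv (fun m hm => ?_)
  exact htrans (mcval_flow @htrans hv key.2.1 m hm) key.2.2
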